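/- Let G = ∫_0^1 1/(1 − log v) dv (natural logarithm, integral over (0,1)). Define integer sequences p, q by p(0)=0, p(1)=1, q(0)=1, q(1)=1, and p(n+1) = p(n) + c(n)·p(n−1), q(n+1) = q(n) + c(n)·q(n−1) for n ≥ 1, where c(n) = ⌈n/2⌉ (so the partial numerators are 1, 1, 2, 2, 3, 3, 4, 4, …). Then the sequence of convergents p(n)/q(n) (taking the values 0/1, 1/1, 1/2, 2/3, 4/7, 8/13, 20/34, 44/73, 124/209, 300/501, …) converges to G as n → ∞. -/

import Mathlib

/-- Partial numerators `1, 1, 2, 2, 3, 3, 4, 4, …` of Euler's continued fraction: `c n = ⌈n/2⌉`. -/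
def eulerCFnum (n : ℕ) : ℕ := (n + 1) / 2

/-- Numerators of the convergents. -/
def eulerCFp : ℕ → ℤ
  | 0 => 0
  | 1 => 1
  | n + 2 => eulerCFp (n + 1) + (eulerCFnum (n + 1) : ℤ) * eulerCFp n

/-- Denominators of the convergents. -/
def eulerCFq : ℕ → ℤ
  | 0 => 1
  | 1 => 1
  | n + 2 => eulerCFq (n + 1) + (eulerCFnum (n + 1) : ℤ) * eulerCFq n


/-!
Write `G = ∫₀^∞ e^{-x} / (1 + x) dx` (substitute `v = e^{-x}`) and
`J a b = ∫₀^∞ x ^ a e^{-x} / (1 + x) ^ b dx`. Integration by parts and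
`1 = x / (1 + x) + 1 / (1 + x)` show that `r n = (-1) ^ n ⌊n/2⌋! J ⌈n/2⌉ (⌊n/2⌋ + 1)` satisfies the
recurrence of `p` and `q`; its initial values `G` and `G - 1` are those of `G q n - p n`, so the two
sequences agree. Since `0 ≤ J a b ≤ 1` for `a ≤ b` and `q n ≥ (⌊n/2⌋ + 1)!`, this gives
`|p n / q n - G| ≤ 1 / (⌊n/2⌋ + 1)`.
-/

open MeasureTheory Set Filter Real
open scoped Nat Topology

noncomputable section

def gompertzMoment (a b : ℕ) : ℝ := ∫ x in Ioi (0 : ℝ), x ^ a / (1 + x) ^ b * exp (-x)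

lemma pow_div_one_add_pow_le_one {x : ℝ} (hx : 0 ≤ x) {a b : ℕ} (hab : a ≤ b) :
    x ^ a / (1 + x) ^ b ≤ 1 := by
  rw [div_le_one (by positivity)]
  calc x ^ a ≤ (1 + x) ^ a := by gcongr; linarith
    _ ≤ (1 + x) ^ b := pow_le_pow_right₀ (by linarith) hab

lemma integrableOn_gompertzMoment {a b : ℕ} (hab : a ≤ b) :
    IntegrableOn (fun x : ℝ => x ^ a / (1 + x) ^ b * exp (-x)) (Ioi 0) := by
  refine (integrableOn_exp_neg_Ioi 0).mono' (by fun_prop) ?_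
  filter_upwards [ae_restrict_mem measurableSet_Ioi] with x (hx : 0 < x)
  rw [norm_of_nonneg (by positivity)]
  exact mul_le_of_le_one_left (exp_pos _).le (pow_div_one_add_pow_le_one hx.le hab)

lemma gompertzMoment_nonneg (a b : ℕ) : 0 ≤ gompertzMoment a b :=
  setIntegral_nonneg measurableSet_Ioi fun x (hx : 0 < x) => by positivity

lemma gompertzMoment_le_one {a b : ℕ} (hab : a ≤ b) : gompertzMoment a b ≤ 1 := by
  rw [← integral_exp_neg_Ioi_zero]
  refine setIntegral_mono_on (integrableOn_gompertzMoment hab) (integrableOn_exp_neg_Ioi 0)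
    measurableSet_Ioi fun x (hx : 0 < x) => ?_
  exact mul_le_of_le_one_left (exp_pos _).le (pow_div_one_add_pow_le_one hx.le hab)

lemma gompertzMoment_zero_zero : gompertzMoment 0 0 = 1 := by
  simp only [gompertzMoment, pow_zero, div_one, one_mul]
  exact integral_exp_neg_Ioi_zero

lemma gompertzMoment_eq_add {a b : ℕ} (hab : a ≤ b) :
    gompertzMoment a b = gompertzMoment (a + 1) (b + 1) + gompertzMoment a (b + 1) := by
  rw [gompertzMoment, gompertzMoment, gompertzMoment, ← integral_add
    (integrableOn_gompertzMoment (by omega)) (integrableOn_gompertzMoment (by omega))]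
  refine setIntegral_congr_fun measurableSet_Ioi fun x (hx : 0 < x) => ?_
  field_simp
  ring

lemma gompertzMoment_succ_succ {a b : ℕ} (hab : a ≤ b) :
    gompertzMoment (a + 1) (b + 1) =
      (a + 1) * gompertzMoment a (b + 1) - (b + 1) * gompertzMoment (a + 1) (b + 2) := by
  set F : ℝ → ℝ := fun x => x ^ (a + 1) / (1 + x) ^ (b + 1) * exp (-x)
  have hderiv : ∀ x ∈ Ici (0 : ℝ), HasDerivAt F
      ((a + 1) * (x ^ a / (1 + x) ^ (b + 1) * exp (-x))
        - (b + 1) * (x ^ (a + 1) / (1 + x) ^ (b + 2) * exp (-x))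
        - x ^ (a + 1) / (1 + x) ^ (b + 1) * exp (-x)) x := by
    intro x (hx : 0 ≤ x)
    have hx₁ : 1 + x ≠ 0 := by positivity
    refine (((hasDerivAt_pow (a + 1) x).div (((hasDerivAt_id x).const_add 1).pow (b + 1))
      (pow_ne_zero _ hx₁)).mul (hasDerivAt_neg x).exp).congr_deriv ?_
    simp only [Pi.div_apply, Pi.pow_apply, id, Nat.add_sub_cancel]
    field_simp
    push_cast
    ring
  have hlim : Tendsto F atTop (𝓝 0) := by
    refine squeeze_zero' (eventually_atTop.2 ⟨0, fun x hx => by positivity⟩)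
      (eventually_atTop.2 ⟨0, fun x hx => ?_⟩) tendsto_exp_neg_atTop_nhds_zero
    exact mul_le_of_le_one_left (exp_pos _).le (pow_div_one_add_pow_le_one hx (by omega))
  have hI₁ := (integrableOn_gompertzMoment (a := a) (b := b + 1) (by omega)).const_mul (a + 1 : ℝ)
  have hI₂ := (integrableOn_gompertzMoment (a := a + 1) (b := b + 2) (by omega)).const_mul
    (b + 1 : ℝ)
  have hI₃ := integrableOn_gompertzMoment (a := a + 1) (b := b + 1) (by omega)
  have := integral_Ioi_of_hasDerivAt_of_tendsto' hderiv ((hI₁.sub hI₂).sub hI₃) hlim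
  rw [integral_sub ?_ hI₃, integral_sub hI₁ hI₂, integral_const_mul,
    integral_const_mul] at this
  · norm_num [F] at this
    simp only [gompertzMoment]
    linarith
  · exact hI₁.sub hI₂

lemma gompertzMoment_zero_one :
    gompertzMoment 0 1 = ∫ v in Ioo (0 : ℝ) 1, 1 / (1 - log v) := by
  have himage : (fun x : ℝ => exp (-x)) '' Ioi 0 = Ioo 0 1 := by
    ext v
    constructor
    · rintro ⟨x, hx, rfl⟩
      exact ⟨exp_pos _, exp_lt_one_iff.2 (neg_lt_zero.2 hx)⟩
    · rintro ⟨hv₀, hv₁⟩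
      exact ⟨-log v, neg_pos.2 (log_neg hv₀ hv₁), by simp [exp_log hv₀]⟩
  have hderiv : ∀ x ∈ Ioi (0 : ℝ),
      HasDerivWithinAt (fun x : ℝ => exp (-x)) (-exp (-x)) (Ioi 0) x := fun x _ => by
    simpa using ((hasDerivAt_neg x).exp).hasDerivWithinAt
  have hinj : InjOn (fun x : ℝ => exp (-x)) (Ioi 0) := fun a _ b _ h => by
    simpa using exp_injective h
  rw [← himage, integral_image_eq_integral_abs_deriv_smul measurableSet_Ioi hderiv hinj]
  refine setIntegral_congr_fun measurableSet_Ioi fun x _ => ?_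
  simp only [abs_neg, abs_of_pos (exp_pos _), smul_eq_mul, log_exp, sub_neg_eq_add]
  ring

def IsEulerCFSolution (u : ℕ → ℝ) : Prop :=
  ∀ n, u (n + 2) = u (n + 1) + eulerCFnum (n + 1) * u n

lemma IsEulerCFSolution.eq {u v : ℕ → ℝ} (hu : IsEulerCFSolution u) (hv : IsEulerCFSolution v)
    (h₀ : u 0 = v 0) (h₁ : u 1 = v 1) : u = v := by
  funext n
  induction n using Nat.twoStepInduction with
  | zero => exact h₀
  | one => exact h₁
  | more n ih₀ ih₁ => rw [hu, hv, ih₀, ih₁]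

lemma isEulerCFSolution_mul_eulerCFq_sub_eulerCFp (x : ℝ) :
    IsEulerCFSolution fun n => x * eulerCFq n - eulerCFp n := fun n => by
  simp only [eulerCFq, eulerCFp]
  push_cast
  ring

lemma eulerCFnum_two_mul_add_one (m : ℕ) : eulerCFnum (2 * m + 1) = m + 1 := by
  unfold eulerCFnum; omega

lemma eulerCFnum_two_mul (m : ℕ) : eulerCFnum (2 * m) = m := by
  unfold eulerCFnum; omega

def gompertzRemainder (n : ℕ) : ℝ :=
  (-1) ^ n * (n / 2)! * gompertzMoment ((n + 1) / 2) (n / 2 + 1)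

lemma gompertzRemainder_two_mul (m : ℕ) :
    gompertzRemainder (2 * m) = m ! * gompertzMoment m (m + 1) := by
  simp [gompertzRemainder, pow_mul, show (2 * m + 1) / 2 = m by omega]

lemma gompertzRemainder_two_mul_add_one (m : ℕ) :
    gompertzRemainder (2 * m + 1) = -(m ! * gompertzMoment (m + 1) (m + 1)) := by
  simp [gompertzRemainder, pow_succ, pow_mul, show (2 * m + 1) / 2 = m by omega,
    show (2 * m + 1 + 1) / 2 = m + 1 by omega]

lemma isEulerCFSolution_gompertzRemainder : IsEulerCFSolution gompertzRemainder := by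
  intro n
  obtain ⟨m, rfl | rfl⟩ := Nat.even_or_odd' n
  · rw [show 2 * m + 2 = 2 * (m + 1) by ring, gompertzRemainder_two_mul,
      gompertzRemainder_two_mul_add_one, gompertzRemainder_two_mul, eulerCFnum_two_mul_add_one,
      gompertzMoment_succ_succ le_rfl, Nat.factorial_succ]
    push_cast
    ring
  · rw [show 2 * m + 1 + 2 = 2 * (m + 1) + 1 by ring, show 2 * m + 1 + 1 = 2 * (m + 1) by ring,
      gompertzRemainder_two_mul_add_one, gompertzRemainder_two_mul,
      gompertzRemainder_two_mul_add_one, eulerCFnum_two_mul,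
      gompertzMoment_eq_add (a := m + 1) le_rfl, Nat.factorial_succ]
    push_cast
    ring

lemma gompertzRemainder_eq_sub (n : ℕ) :
    gompertzRemainder n = gompertzMoment 0 1 * eulerCFq n - eulerCFp n := by
  refine congrFun (isEulerCFSolution_gompertzRemainder.eq
    (isEulerCFSolution_mul_eulerCFq_sub_eulerCFp _) ?_ ?_) n
  · simp [gompertzRemainder, eulerCFq, eulerCFp]
  · have := gompertzMoment_eq_add (le_refl 0)
    simp [gompertzRemainder, eulerCFq, eulerCFp, gompertzMoment_zero_zero] at this ⊢
    linarith

lemma abs_gompertzRemainder_le (n : ℕ) : |gompertzRemainder n| ≤ (n / 2)! := by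
  rw [gompertzRemainder, abs_mul, abs_mul, abs_pow, abs_neg, abs_one, one_pow, one_mul,
    Nat.abs_cast, abs_of_nonneg (gompertzMoment_nonneg _ _)]
  exact mul_le_of_le_one_right (by positivity) (gompertzMoment_le_one (by omega))

lemma factorial_le_eulerCFq (n : ℕ) : ((n / 2 + 1)! : ℤ) ≤ eulerCFq n := by
  induction n using Nat.twoStepInduction with
  | zero => decide
  | one => decide
  | more n h₀ h₁ =>
    have hq₀ : (0 : ℤ) ≤ eulerCFq n := le_trans (by positivity) h₀
    rw [eulerCFq]
    obtain ⟨m, rfl | rfl⟩ := Nat.even_or_odd' n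
    · rw [show 2 * m / 2 + 1 = m + 1 by omega] at h₀
      rw [show (2 * m + 1) / 2 + 1 = m + 1 by omega] at h₁
      rw [eulerCFnum_two_mul_add_one, show (2 * m + 2) / 2 + 1 = m + 1 + 1 by omega,
        Nat.factorial_succ]
      push_cast
      nlinarith
    · rw [show (2 * m + 1 + 2) / 2 + 1 = (2 * m + 1 + 1) / 2 + 1 by omega]
      have : (0 : ℤ) ≤ eulerCFnum (2 * m + 1 + 1) * eulerCFq (2 * m + 1) := by positivity
      linarith

lemma abs_convergent_sub_le (n : ℕ) :
    |(eulerCFp n : ℝ) / eulerCFq n - gompertzMoment 0 1| ≤ 1 / ((n / 2 : ℕ) + 1 : ℝ) := by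
  have hq : ((n / 2 + 1)! : ℝ) ≤ eulerCFq n := by exact_mod_cast factorial_le_eulerCFq n
  have hq₀ : (0 : ℝ) < eulerCFq n := lt_of_lt_of_le (by positivity) hq
  rw [← abs_neg, neg_sub, sub_div' hq₀.ne', abs_div, abs_of_pos hq₀, ← gompertzRemainder_eq_sub,
    div_le_div_iff₀ hq₀ (by positivity), one_mul]
  calc |gompertzRemainder n| * ((n / 2 : ℕ) + 1 : ℝ) ≤ (n / 2)! * ((n / 2 : ℕ) + 1 : ℝ) := by
        gcongr; exact abs_gompertzRemainder_le n
    _ = ((n / 2 + 1)! : ℝ) := by push_cast [Nat.factorial_succ]; ring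
    _ ≤ eulerCFq n := hq

end

theorem eulerCF_tendsto_gompertz :
    Filter.Tendsto (fun n : ℕ => (eulerCFp n : ℝ) / (eulerCFq n : ℝ)) Filter.atTop
      (nhds (∫ v in Set.Ioo (0 : ℝ) 1, 1 / (1 - Real.log v))) := by
  rw [← gompertzMoment_zero_one, tendsto_iff_norm_sub_tendsto_zero]
  exact squeeze_zero (fun n => norm_nonneg _) abs_convergent_sub_le
    ((tendsto_one_div_add_atTop_nhds_zero_nat).comp (Nat.tendsto_div_const_atTop two_ne_zero))
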